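/- arXiv:math/9908145 — 2 statements merged into one kernel-verified Lean document; each statement's English description precedes it below -/
import Mathlib

section
/- Define \(F_i(a,b;c;x) := \sum_{k=0}^i \frac{(a)_k}{\Gamma(c+k)} L_{i-k}^{(-a-i)}(-x)\, L_k^{(b)}(x)\). Then for every nonnegative integer i and all real a, b, c, \(F_i(a,b;c;x) = \frac{1}{\Gamma(c+i)} \sum_{j=0}^i (-1)^j \binom{a-c}{j}\binom{b-c+1}{i-j}(a)_{i-j}\, x^j\). -/
open Finset

/-- Rising factorial (Pochhammer symbol) `(x)_k = x(x+1)⋯(x+k-1)`. -/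
noncomputable def poch (x : ℝ) (k : ℕ) : ℝ := (ascPochhammer ℝ k).eval x

/-- Generalized binomial coefficient `C(y, m) = (y-m+1)_m / m!` for real `y`. -/
noncomputable def gbinom (y : ℝ) (m : ℕ) : ℝ := poch (y - m + 1) m / m.factorial

/-- Generalized binomial coefficient with integer lower index, zero for negative index. -/
noncomputable def gbinomZ (y : ℝ) (m : ℤ) : ℝ := if 0 ≤ m then gbinom y m.toNat else 0

/-- Generalized Laguerre polynomial `L_n^{(a)}(x)`, defined for all real `a`. -/
noncomputable def Lag (n : ℕ) (a : ℝ) (x : ℝ) : ℝ :=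
  ∑ k ∈ range (n + 1),
    (-1 : ℝ) ^ k * poch (a + k + 1) (n - k) / (n - k).factorial * x ^ k / k.factorial

/-!
Since Mathlib's `Real.Gamma` vanishes at the poles, `1 / Γ` is the entire reciprocal Gamma function
and `1 / Γ(c + k) = (c + k)_{i-k} / Γ(c + i)` holds for all `c`; this reduces the claim to a
polynomial identity. Expanding both Laguerre polynomials writes its left side as a sum over
compositions `i = l + s + m + r`, where `k = l + s` and `x` occurs to the power `j = l + m`.
Regrouping by `j` and `t = s + r = i - j`, the sum over `s + r = t` and then the sum over
`l + m = j` are both Chu–Vandermonde convolutions of Pochhammer symbols.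
-/

lemma neg_one_pow_mul_self {R : Type*} [Monoid R] [HasDistribNeg R] (n : ℕ) :
    (-1 : R) ^ n * (-1) ^ n = 1 := by
  rw [← pow_add, ← two_mul, pow_mul, neg_one_sq, one_pow]

lemma poch_add (x : ℝ) (m n : ℕ) : poch x (m + n) = poch x m * poch (x + m) n := by
  simp [poch, ← ascPochhammer_mul, Polynomial.eval_comp]

lemma poch_neg_sub_add_one (y : ℝ) (n : ℕ) : poch (-y - n + 1) n = (-1) ^ n * poch y n := by
  rw [poch, poch, show -y - n + 1 = -(y + n - 1) by ring, ascPochhammer_eval_neg_eq_descPochhammer,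
    descPochhammer_eval_eq_ascPochhammer, show y + n - 1 - n + 1 = y by ring]

lemma gbinom_eq_ringChoose (y : ℝ) (n : ℕ) : gbinom y n = Ring.choose y n := by
  rw [Ring.choose_eq_smul, Polynomial.descPochhammer_smeval_eq_ascPochhammer,
    Polynomial.ascPochhammer_smeval_eq_eval, gbinom, poch, smul_eq_mul, inv_mul_eq_div]

lemma gbinom_add (x y : ℝ) (n : ℕ) :
    gbinom (x + y) n = ∑ p ∈ antidiagonal n, gbinom x p.1 * gbinom y p.2 := by
  simp only [gbinom_eq_ringChoose]
  exact Ring.add_choose_eq n (Commute.all x y)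

lemma poch_div_factorial (y : ℝ) (n : ℕ) : poch y n / n.factorial = gbinom (y + n - 1) n := by
  rw [gbinom, show y + n - 1 - n + 1 = y by ring]

lemma gbinom_neg (y : ℝ) (n : ℕ) : gbinom (-y) n = (-1) ^ n * (poch y n / n.factorial) := by
  rw [gbinom, poch_neg_sub_add_one, mul_div_assoc]

lemma neg_one_pow_mul_gbinom_neg (y : ℝ) (n : ℕ) :
    (-1) ^ n * gbinom (-y) n = poch y n / n.factorial := by
  rw [gbinom_neg, ← mul_assoc, neg_one_pow_mul_self, one_mul]

-- Chu–Vandermonde: the summand is `C(-u, p.1) * C(v + n - 1, p.2)`.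
lemma sum_antidiagonal_neg_one_pow_mul_poch_mul_poch (n : ℕ) (u v : ℝ) :
    ∑ p ∈ antidiagonal n,
        (-1) ^ p.1 * (poch u p.1 / p.1.factorial) * (poch (v + p.1) p.2 / p.2.factorial)
      = poch (v - u) n / n.factorial := by
  rw [poch_div_factorial, show v - u + n - 1 = -u + (v + n - 1) by ring, gbinom_add]
  refine sum_congr rfl fun p hp => ?_
  rw [← gbinom_neg, poch_div_factorial, ← mem_antidiagonal.mp hp]
  push_cast
  ring_nf

lemma sum_antidiagonal_neg_one_pow_snd_mul_poch_mul_poch (n : ℕ) (u v : ℝ) :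
    ∑ p ∈ antidiagonal n,
        (-1) ^ p.2 * (poch u p.1 / p.1.factorial) * (poch (v + p.1) p.2 / p.2.factorial)
      = (-1) ^ n * (poch (v - u) n / n.factorial) := by
  rw [← sum_antidiagonal_neg_one_pow_mul_poch_mul_poch, mul_sum]
  refine sum_congr rfl fun p hp => ?_
  rw [← mem_antidiagonal.mp hp, pow_add]
  linear_combination (-(-1) ^ p.2 * (poch u p.1 / p.1.factorial)
    * (poch (v + p.1) p.2 / p.2.factorial)) * neg_one_pow_mul_self (R := ℝ) p.1

lemma one_div_Gamma_eq_poch_div_Gamma (y : ℝ) (n : ℕ) :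
    1 / Real.Gamma y = poch y n / Real.Gamma (y + n) := by
  induction n with
  | zero => simp [poch]
  | succ n ih =>
    rw [ih, Nat.cast_succ, ← add_assoc, poch_add, show poch (y + n) 1 = y + n by simp [poch]]
    by_cases h : y + n = 0
    · rw [h, zero_add, Real.Gamma_one, eq_neg_of_add_eq_zero_left h]
      simp
    · rw [Real.Gamma_add_one h, mul_comm (y + n) (Real.Gamma _), mul_div_mul_right _ _ h]

lemma Lag_eq_sum_antidiagonal (n : ℕ) (α x : ℝ) :
    Lag n α x = ∑ p ∈ antidiagonal n,
      (-1) ^ p.1 * poch (α + p.1 + 1) p.2 / p.2.factorial * x ^ p.1 / p.1.factorial :=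
  (Nat.sum_antidiagonal_eq_sum_range_succ
    (fun k m => (-1) ^ k * poch (α + k + 1) m / m.factorial * x ^ k / k.factorial) n).symm

lemma Lag_neg_eq_sum_antidiagonal (n : ℕ) (α x : ℝ) :
    Lag n α (-x) = ∑ p ∈ antidiagonal n,
      poch (α + p.1 + 1) p.2 / p.2.factorial * x ^ p.1 / p.1.factorial := by
  rw [Lag_eq_sum_antidiagonal]
  refine sum_congr rfl fun p _ => ?_
  rw [neg_pow x]
  linear_combination (poch (α + p.1 + 1) p.2 / p.2.factorial * x ^ p.1 / p.1.factorial)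
    * neg_one_pow_mul_self (R := ℝ) p.1

lemma sum_antidiagonal_antidiagonal_comm {M : Type*} [AddCommMonoid M] (n : ℕ)
    (f : ℕ → ℕ → ℕ → ℕ → M) :
    ∑ p ∈ antidiagonal n, ∑ q ∈ antidiagonal p.1, ∑ r ∈ antidiagonal p.2, f q.1 q.2 r.1 r.2
      = ∑ p ∈ antidiagonal n, ∑ q ∈ antidiagonal p.1, ∑ r ∈ antidiagonal p.2,
          f q.1 r.1 q.2 r.2 := by
  simp only [sum_sigma']
  let e : (_ : ℕ × ℕ) × (_ : ℕ × ℕ) × ℕ × ℕ → (_ : ℕ × ℕ) × (_ : ℕ × ℕ) × ℕ × ℕ :=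
    fun x => ⟨(x.2.1.1 + x.2.2.1, x.2.1.2 + x.2.2.2), (x.2.1.1, x.2.2.1), (x.2.1.2, x.2.2.2)⟩
  refine sum_nbij' e e ?_ ?_ ?_ ?_ ?_
  all_goals
    rintro ⟨⟨_, _⟩, ⟨_, _⟩, ⟨_, _⟩⟩
    simp [e, mem_sigma, HasAntidiagonal.mem_antidiagonal]
  all_goals omega

-- The summand of `(a)_k (c + k)_{k'} L_{k'}^{(-a-k-k')}(-x) L_k^{(b)}(x)` for `k = l + s`,
-- `k' = m + r`, where `x ^ l` comes from the second Laguerre factor and `x ^ m` from the first.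
noncomputable def laguerreTerm (a b c x : ℝ) (l s m r : ℕ) : ℝ :=
  poch a (s + r) * x ^ (l + m)
    * ((-1) ^ l * (poch (a + ↑(s + r)) l / l.factorial)
      * (poch (c + ↑(s + r) + l) m / m.factorial))
    * ((-1) ^ r * (poch (b + l + 1) s / s.factorial) * (poch (c + l + s) r / r.factorial))

lemma poch_mul_poch_mul_Lag_mul_Lag (a b c x : ℝ) (k k' : ℕ) :
    poch a k * poch (c + k) k' * Lag k' (-a - ↑(k + k')) (-x) * Lag k b x
      = ∑ q ∈ antidiagonal k, ∑ r ∈ antidiagonal k', laguerreTerm a b c x q.1 q.2 r.1 r.2 := by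
  rw [Lag_neg_eq_sum_antidiagonal, Lag_eq_sum_antidiagonal, mul_sum]
  refine sum_congr rfl fun q hq => ?_
  rw [mul_sum, sum_mul]
  refine sum_congr rfl fun r hr => ?_
  rw [HasAntidiagonal.mem_antidiagonal] at hq hr
  subst hq hr
  obtain ⟨l, s⟩ := q
  obtain ⟨m, r⟩ := r
  dsimp only
  have h_neg : poch (-a - ↑(l + s + (m + r)) + m + 1) r = (-1) ^ r * poch (a + ↑(l + s)) r := by
    rw [← poch_neg_sub_add_one]
    push_cast
    ring_nf
  have h_a : poch a (l + s) * poch (a + ↑(l + s)) r = poch a (s + r) * poch (a + ↑(s + r)) l := by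
    rw [← poch_add, ← poch_add, show l + s + r = s + r + l by ring]
  have h_c : poch (c + ↑(l + s)) (m + r) = poch (c + l + s) r * poch (c + ↑(s + r) + l) m := by
    rw [add_comm m r, poch_add]
    congr 2 <;> push_cast <;> ring
  rw [laguerreTerm, h_neg, h_c]
  linear_combination (poch (c + l + s) r * poch (c + ↑(s + r) + l) m * (-1) ^ r / r.factorial
    * x ^ m / m.factorial * ((-1) ^ l * poch (b + l + 1) s / s.factorial * x ^ l / l.factorial))
    * h_a

theorem sum_poch_mul_poch_mul_Lag_mul_Lag (a b c x : ℝ) (i : ℕ) :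
    ∑ k ∈ range (i + 1), poch a k * poch (c + k) (i - k) * Lag (i - k) (-a - i) (-x) * Lag k b x
      = ∑ j ∈ range (i + 1),
          (-1) ^ j * gbinom (a - c) j * gbinom (b - c + 1) (i - j) * poch a (i - j) * x ^ j := by
  rw [← Nat.sum_antidiagonal_eq_sum_range_succ
      (fun k k' => poch a k * poch (c + k) k' * Lag k' (-a - i) (-x) * Lag k b x),
    ← Nat.sum_antidiagonal_eq_sum_range_succ
      (fun j t => (-1) ^ j * gbinom (a - c) j * gbinom (b - c + 1) t * poch a t * x ^ j)]
  calc _ = ∑ p ∈ antidiagonal i, ∑ q ∈ antidiagonal p.1, ∑ r ∈ antidiagonal p.2,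
          laguerreTerm a b c x q.1 q.2 r.1 r.2 := by
        refine sum_congr rfl fun p hp => ?_
        rw [← mem_antidiagonal.mp hp]
        exact poch_mul_poch_mul_Lag_mul_Lag a b c x p.1 p.2
    _ = ∑ p ∈ antidiagonal i, ∑ q ∈ antidiagonal p.1, ∑ r ∈ antidiagonal p.2,
          laguerreTerm a b c x q.1 r.1 q.2 r.2 :=
          sum_antidiagonal_antidiagonal_comm i (laguerreTerm a b c x)
    _ = ∑ p ∈ antidiagonal i,
          poch a p.2 * x ^ p.1 * (poch (c - a) p.1 / p.1.factorial)
            * ((-1) ^ p.2 * (poch (c - b - 1) p.2 / p.2.factorial)) := by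
        refine sum_congr rfl fun ⟨j, t⟩ _ => ?_
        have inner (l : ℕ) : ∑ r ∈ antidiagonal t,
            (-1) ^ r.2 * (poch (b + l + 1) r.1 / r.1.factorial)
              * (poch (c + l + r.1) r.2 / r.2.factorial)
            = (-1) ^ t * (poch (c - b - 1) t / t.factorial) := by
          rw [sum_antidiagonal_neg_one_pow_snd_mul_poch_mul_poch,
            show c + l - (b + l + 1) = c - b - 1 by ring]
        have outer : ∑ q ∈ antidiagonal j,
            (-1) ^ q.1 * (poch (a + t) q.1 / q.1.factorial)
              * (poch (c + t + q.1) q.2 / q.2.factorial)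
            = poch (c - a) j / j.factorial := by
          rw [sum_antidiagonal_neg_one_pow_mul_poch_mul_poch, show c + t - (a + t) = c - a by ring]
        rw [← outer, mul_sum, sum_mul]
        refine sum_congr rfl fun q hq => ?_
        rw [← inner q.1, mul_sum]
        refine sum_congr rfl fun r hr => ?_
        simp only [laguerreTerm, mem_antidiagonal.mp hq, mem_antidiagonal.mp hr]
    _ = _ := by
        refine sum_congr rfl fun p _ => ?_
        rw [show a - c = -(c - a) by ring, show b - c + 1 = -(c - b - 1) by ring,
          neg_one_pow_mul_gbinom_neg, gbinom_neg]
        ring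

theorem F_polynomial_formula (a b c : ℝ) (i : ℕ) (x : ℝ) :
    ∑ k ∈ range (i + 1),
        poch a k / Real.Gamma (c + k) * Lag (i - k) (-a - i) (-x) * Lag k b x
      = 1 / Real.Gamma (c + i) *
        ∑ j ∈ range (i + 1),
          (-1 : ℝ) ^ j * gbinom (a - c) j * gbinom (b - c + 1) (i - j) * poch a (i - j)
            * x ^ j := by
  rw [← sum_poch_mul_poch_mul_Lag_mul_Lag, mul_sum]
  refine sum_congr rfl fun k hk => ?_
  rw [div_eq_mul_one_div (poch a k), one_div_Gamma_eq_poch_div_Gamma (c + k) (i - k),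
    Nat.cast_sub (mem_range_succ_iff.mp hk), add_add_sub_cancel]
  ring
end

section
/- For all real \(\alpha > -1\) and every integer \(n \ge 1\), \(\frac{1}{(\alpha+1)(\alpha+2)}\sum_{k=1}^n \binom{k+\alpha}{k-1}\binom{k+\alpha+1}{k-2} = \frac{1}{\alpha+1}\binom{n+\alpha+1}{n-2}\sum_{m=0}^{n-2}\frac{(-n+2)_m(-\alpha-2)_m(\alpha+3)_m}{(2)_m(\alpha+4)_m\, m!}\). -/
/-!
Both sides vanish at `n = 0`, so it suffices that the right-hand side `R n` increases by the
`(n+1)`-st summand of the left-hand side. For `n ≥ 2` this amounts to a three-term recurrence in `n`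
for the terminating `₃F₂`. The recurrence comes from summing over `m` the contiguous relation
`(b - x)(x)ₘ(b)ₘ + x(x+1)ₘ(b)ₘ = b(x)ₘ(b+1)ₘ` with `b = α + 3`, which leaves
`₂F₁(-n+1, -α-2; 2; 1)`, evaluated by Chu–Vandermonde.
-/

open Finset

open scoped Nat

theorem poch_succ (x : ℝ) (k : ℕ) : poch x (k + 1) = poch x k * (x + k) :=
  ascPochhammer_succ_eval k x

theorem poch_succ_left (x : ℝ) (k : ℕ) : poch x (k + 1) = x * poch (x + 1) k := by
  simp [poch, ascPochhammer_succ_left, Polynomial.eval_comp]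

theorem poch_two (k : ℕ) : poch 2 k = (k + 1)! := by
  have h := poch_succ_left 1 k
  rw [poch, ascPochhammer_eval_one] at h
  norm_num at h
  exact h.symm

theorem poch_pos {x : ℝ} (hx : 0 < x) (k : ℕ) : 0 < poch x k :=
  ascPochhammer_pos k x hx

theorem poch_neg_natCast_of_lt {N k : ℕ} (h : N < k) : poch (-N) k = 0 :=
  ascPochhammer_eval_neg_coe_nat_of_lt h

theorem gbinom_eq_choose (y : ℝ) (m : ℕ) : gbinom y m = Ring.choose y m := by
  rw [Ring.choose_eq_smul, Polynomial.descPochhammer_smeval_eq_ascPochhammer,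
    Polynomial.ascPochhammer_smeval_eq_eval, gbinom, poch, smul_eq_mul, div_eq_inv_mul]

theorem gbinom_natCast (N m : ℕ) : gbinom N m = N.choose m := by
  rw [gbinom_eq_choose, Ring.choose_natCast]

theorem poch_neg (r : ℝ) (m : ℕ) : poch (-r) m = (-1) ^ m * m ! * gbinom r m := by
  rw [poch, ascPochhammer_eval_neg_eq_descPochhammer, descPochhammer_eval_eq_ascPochhammer,
    gbinom, poch]
  field_simp

theorem sum_antidiagonal_gbinom_mul_gbinom (x y : ℝ) (K : ℕ) :
    ∑ ij ∈ antidiagonal K, gbinom x ij.1 * gbinom y ij.2 = gbinom (x + y) K := by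
  simp only [gbinom_eq_choose]
  exact (Ring.add_choose_eq K (Commute.all x y)).symm

/-- `₂F₁(-N, b; 2; 1) = (2 - b)_N / (2)_N`: the `m`-th summand times `N + 1` is
`C(-b, m) C(N + 1, N - m)`, so this is Vandermonde's identity. -/
theorem chu_vandermonde_two (b : ℝ) (N : ℕ) :
    ∑ m ∈ range (N + 1), poch (-N) m * poch b m / (poch 2 m * m !) = poch (2 - b) N / poch 2 N := by
  have hterm : ∀ m ∈ range (N + 1), poch (-N) m * poch b m / (poch 2 m * m !)
      = gbinom (-b) m * gbinom ((N + 1 : ℕ) : ℝ) (N - m) / (N + 1) := by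
    intro m hm
    have hchoose : ((N + 1).choose (N - m) : ℝ) * (m + 1) = (N + 1) * N.choose m := by
      rw [← Nat.choose_symm_of_eq_add (by grind : N + 1 = m + 1 + (N - m))]
      exact_mod_cast (Nat.add_one_mul_choose_eq N m).symm
    have hb : poch b m = (-1) ^ m * m ! * gbinom (-b) m := by simpa using poch_neg (-b) m
    have hsign : ((-1 : ℝ) ^ m) ^ 2 = 1 := by rw [← pow_mul, mul_comm, pow_mul, neg_one_sq, one_pow]
    have hprod : poch (-N) m * poch b m = m ! ^ 2 * N.choose m * gbinom (-b) m := by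
      rw [poch_neg, hb, gbinom_natCast]
      linear_combination (m ! ^ 2 * N.choose m * gbinom (-b) m : ℝ) * hsign
    rw [hprod, gbinom_natCast, poch_two, Nat.factorial_succ]
    push_cast
    field_simp
    linear_combination -gbinom (-b) m * hchoose
  rw [sum_congr rfl hterm, ← sum_div,
    ← Nat.sum_antidiagonal_eq_sum_range_succ (fun i j => gbinom (-b) i * gbinom _ j),
    sum_antidiagonal_gbinom_mul_gbinom, gbinom, poch_two, Nat.factorial_succ]
  push_cast
  rw [show -b + (N + 1) - N + 1 = 2 - b by ring]
  field_simp

theorem poch_contiguous (x b : ℝ) (m : ℕ) :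
    (b - x) * poch x m * poch b m + x * poch (x + 1) m * poch b m
      = b * poch x m * poch (b + 1) m := by
  linear_combination poch b m * (poch_succ x m - poch_succ_left x m)
    - poch x m * (poch_succ b m - poch_succ_left b m)

/-- The `m`-th summand of `₃F₂(x, -α-2, α+3; 2, α+4; 1)`; the theorem has `x = -n + 2`. -/
noncomputable def hgTerm (α x : ℝ) (m : ℕ) : ℝ :=
  poch x m * poch (-α - 2) m * poch (α + 3) m / (poch 2 m * poch (α + 4) m * m !)

theorem hgTerm_contiguous {α : ℝ} (x : ℝ) {m : ℕ} (h : poch (α + 4) m ≠ 0) :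
    (α + 3 - x) * hgTerm α x m + x * hgTerm α (x + 1) m
      = (α + 3) * (poch x m * poch (-α - 2) m / (poch 2 m * m !)) := by
  have hc := poch_contiguous x (α + 3) m
  rw [show α + 3 + 1 = α + 4 by ring] at hc
  have h2 : poch 2 m ≠ 0 := (poch_pos two_pos m).ne'
  unfold hgTerm
  field_simp
  linear_combination poch (-α - 2) m * hc

theorem sum_hgTerm_recurrence {α : ℝ} (hα : -4 < α) (N : ℕ) :
    (α + N + 4) * ∑ m ∈ range (N + 2), hgTerm α (-(N + 1)) m
        - (N + 1) * ∑ m ∈ range (N + 1), hgTerm α (-N) m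
      = (α + 3) * poch (α + 4) (N + 1) / (N + 2)! := by
  have htop : hgTerm α (-N) (N + 1) = 0 := by
    simp [hgTerm, poch_neg_natCast_of_lt (Nat.lt_succ_self N)]
  have hcv := chu_vandermonde_two (-α - 2) (N + 1)
  push_cast at hcv
  rw [show 2 - (-α - 2) = α + 4 by ring, poch_two] at hcv
  calc _ = ∑ m ∈ range (N + 2), ((α + 3 - -(N + 1)) * hgTerm α (-(N + 1)) m
          + -(N + 1) * hgTerm α (-(N + 1) + 1) m) := by
        rw [sum_add_distrib, ← mul_sum, ← mul_sum, show -((N : ℝ) + 1) + 1 = -N by ring,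
          sum_range_succ (hgTerm α (-N)) (N + 1), htop]
        ring
    _ = (α + 3) * ∑ m ∈ range (N + 2),
          poch (-(N + 1)) m * poch (-α - 2) m / (poch 2 m * m !) := by
        rw [mul_sum]
        exact sum_congr rfl fun m _ => hgTerm_contiguous _ (poch_pos (by linarith) m).ne'
    _ = _ := by rw [hcv, mul_div_assoc]

theorem gbinomZ_of_neg (y : ℝ) {m : ℤ} (h : m < 0) : gbinomZ y m = 0 := by
  simp [gbinomZ, not_le.mpr h]

theorem gbinomZ_eq_poch (α : ℝ) {n N : ℕ} (h : n = N + 2) :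
    gbinomZ ((n : ℝ) + α + 1) ((n : ℤ) - 2) = poch (α + 4) N / N ! := by
  subst h
  rw [gbinomZ, if_pos (by omega), show ((N + 2 : ℕ) - 2 : ℤ).toNat = N by omega, gbinom]
  congr 2
  push_cast
  ring

theorem gbinom_eq_poch (α : ℝ) {n N : ℕ} (h : n = N + 1) :
    gbinom ((n : ℝ) + α) (n - 1) = poch (α + 2) N / N ! := by
  subst h
  rw [gbinom, Nat.add_sub_cancel]
  congr 2
  push_cast
  ring

noncomputable def gammaRhs (α : ℝ) (n : ℕ) : ℝ :=
  1 / (α + 1) * gbinomZ ((n : ℝ) + α + 1) ((n : ℤ) - 2) *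
    ∑ m ∈ range (n - 1), hgTerm α (-(n : ℝ) + 2) m

theorem gammaRhs_succ {α : ℝ} (hα : -1 < α) (n : ℕ) :
    gammaRhs α (n + 1) = gammaRhs α n + 1 / ((α + 1) * (α + 2)) *
      (gbinom (((n + 1 : ℕ) : ℝ) + α) (n + 1 - 1) *
        gbinomZ (((n + 1 : ℕ) : ℝ) + α + 1) (((n + 1 : ℕ) : ℤ) - 2)) := by
  have hα1 : α + 1 ≠ 0 := by linarith
  have hα2 : α + 2 ≠ 0 := by linarith
  match n with
  | 0 => simp [gammaRhs, gbinomZ_of_neg]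
  | 1 =>
    rw [gammaRhs, gammaRhs, gbinomZ_eq_poch α (N := 0) rfl, gbinom_eq_poch α (N := 1) rfl,
      gbinomZ_of_neg _ (by norm_num)]
    simp [hgTerm, poch, ascPochhammer_one]
    field_simp
  | N + 2 =>
    have hrec := sum_hgTerm_recurrence (by linarith : -4 < α) N
    rw [eq_div_iff (by positivity)] at hrec
    rw [gammaRhs, gammaRhs, gbinomZ_eq_poch α (N := N + 1) rfl, gbinomZ_eq_poch α (N := N) rfl,
      gbinom_eq_poch α (N := N + 2) rfl, show N + 2 + 1 - 1 = N + 2 from rfl,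
      show N + 2 - 1 = N + 1 from rfl, show -((N + 2 + 1 : ℕ) : ℝ) + 2 = -(N + 1) by push_cast; ring,
      show -((N + 2 : ℕ) : ℝ) + 2 = -N by push_cast; ring]
    generalize ∑ m ∈ range (N + 2), hgTerm α (-(N + 1)) m = A at *
    generalize ∑ m ∈ range (N + 1), hgTerm α (-N) m = B at *
    rw [poch_succ (α + 4)] at hrec ⊢
    rw [poch_succ_left, poch_succ_left, show α + 2 + 1 + 1 = α + 4 by ring]
    simp only [Nat.factorial_succ] at hrec ⊢
    push_cast at hrec ⊢
    field_simp
    linear_combination poch (α + 4) N * hrec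

theorem gamma0_sum_general (α : ℝ) (hα : -1 < α) (n : ℕ) :
    1 / ((α + 1) * (α + 2)) *
        ∑ k ∈ Icc 1 n, gbinom ((k : ℝ) + α) (k - 1) * gbinomZ ((k : ℝ) + α + 1) ((k : ℤ) - 2)
      = 1 / (α + 1) * gbinomZ ((n : ℝ) + α + 1) ((n : ℤ) - 2) *
        ∑ m ∈ range (n - 1),
          poch (-(n : ℝ) + 2) m * poch (-α - 2) m * poch (α + 3) m /
            (poch 2 m * poch (α + 4) m * m.factorial) := by
  change _ = gammaRhs α n
  induction n with
  | zero => simp [gammaRhs, gbinomZ_of_neg]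
  | succ n ih => rw [sum_Icc_succ_top (by omega), mul_add, ih, gammaRhs_succ hα]

theorem gamma0_sum (α : ℝ) (hα : -1 < α) (n : ℕ) (hn : 1 ≤ n) :
    1 / ((α + 1) * (α + 2)) *
        ∑ k ∈ Icc 1 n, gbinom ((k : ℝ) + α) (k - 1) * gbinomZ ((k : ℝ) + α + 1) ((k : ℤ) - 2)
      = 1 / (α + 1) * gbinomZ ((n : ℝ) + α + 1) ((n : ℤ) - 2) *
        ∑ m ∈ range (n - 1),
          poch (-(n : ℝ) + 2) m * poch (-α - 2) m * poch (α + 3) m /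
            (poch 2 m * poch (α + 4) m * m.factorial) :=
  gamma0_sum_general α hα n
end
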